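/- arXiv:1611.08777 — 2 statements merged into one kernel-verified Lean document; each statement's English description precedes it below -/
import Mathlib

section
/- Let λ be a partition and δ a weak composition. Then the number of set-valued semistandard Young tableaux of shape λ and content δ equals Σ_{μ ⊇ λ} g_{λ,μ} · N_{μ,δ}, where the sum is over partitions μ containing λ, N_{μ,δ} is the number of (ordinary) semistandard Young tableaux of shape μ and content δ, and g_{λ,μ} is the number of fillings of the skew shape μ/λ with positive integers that strictly increase left to right along each row and strictly increase down each column, and in which every entry in row i lies in {1,…,i−1}. -/
/-- `f : ℕ → ℕ` is a partition: weakly decreasing and eventually zero. Row `i : ℕ` is the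
`(i+1)`-st row; its boxes are `(i, j)` with `0 ≤ j < f i`. -/
def IsPartitionFn (f : ℕ → ℕ) : Prop :=
  (∀ a b : ℕ, a ≤ b → f b ≤ f a) ∧ ∃ N : ℕ, ∀ m : ℕ, N ≤ m → f m = 0

/-- A set-valued semistandard Young tableau of shape the partition `lam`: each box carries
a nonempty finite set of positive integers, rows weakly increase
(`max F(i,j) ≤ min F(i,j+1)`) and columns strictly increase (`max F(i,j) < min F(i+1,j)`). -/
structure SVYT (lam : ℕ → ℕ) where
  box : ℕ → ℕ → Finset ℕ
  nonempty : ∀ i j : ℕ, j < lam i → (box i j).Nonempty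
  pos : ∀ i j : ℕ, ∀ e ∈ box i j, 1 ≤ e
  outside : ∀ i j : ℕ, lam i ≤ j → box i j = ∅
  rows : ∀ i j : ℕ, j + 1 < lam i → ∀ a ∈ box i j, ∀ b ∈ box i (j + 1), a ≤ b
  cols : ∀ i j : ℕ, j < lam (i + 1) → ∀ a ∈ box i j, ∀ b ∈ box (i + 1) j, a < b

/-- The content of a set-valued tableau: the number of boxes whose set contains `v`. -/
noncomputable def SVYT.content {lam : ℕ → ℕ} (F : SVYT lam) (v : ℕ) : ℕ :=
  {p : ℕ × ℕ | p.2 < lam p.1 ∧ v ∈ F.box p.1 p.2}.ncard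

/-- An ordinary semistandard Young tableau of shape the partition `mu`: one positive integer
per box, rows weakly increasing, columns strictly increasing (entries outside the shape are
set to `0`). -/
structure SSYT (mu : ℕ → ℕ) where
  entry : ℕ → ℕ → ℕ
  pos : ∀ i j : ℕ, j < mu i → 1 ≤ entry i j
  outside : ∀ i j : ℕ, mu i ≤ j → entry i j = 0
  rows : ∀ i j : ℕ, j + 1 < mu i → entry i j ≤ entry i (j + 1)
  cols : ∀ i j : ℕ, j < mu (i + 1) → entry i j < entry (i + 1) j

/-- The content of an ordinary tableau: the number of boxes with entry `v`. -/
noncomputable def SSYT.content {mu : ℕ → ℕ} (T : SSYT mu) (v : ℕ) : ℕ :=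
  {p : ℕ × ℕ | p.2 < mu p.1 ∧ T.entry p.1 p.2 = v}.ncard

/-- A filling of the skew shape `mu / lam` (boxes `(i,j)` with `lam i ≤ j < mu i`) with
positive integers, strictly increasing along rows and down columns, such that every entry
in the `(i+1)`-st row (index `i : ℕ`) lies in `{1, …, (i+1) - 1} = {1, …, i}`. These are
the objects counted by `g_{λ,μ}` in Lenart's Schur expansion of `G_λ`. -/
structure LenartFilling (lam mu : ℕ → ℕ) where
  entry : ℕ → ℕ → ℕ
  outside : ∀ i j : ℕ, (j < lam i ∨ mu i ≤ j) → entry i j = 0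
  rowBound : ∀ i j : ℕ, lam i ≤ j → j < mu i → 1 ≤ entry i j ∧ entry i j ≤ i
  rows : ∀ i j : ℕ, lam i ≤ j → j + 1 < mu i → entry i j < entry i (j + 1)
  cols : ∀ i j : ℕ, lam i ≤ j → lam (i + 1) ≤ j → j < mu i → j < mu (i + 1) →
    entry i j < entry (i + 1) j

/-!
Lenart's bijection. Starting from a set-valued tableau of shape `λ`, perform rounds
`k = 1, 2, …`: every box keeps its minimum, and each other entry `x` of row `r` moves down to
row `r + 1`, into the leftmost box whose entries all exceed `x`, or, if there is none, into a new
box labelled `k` at the end of that row. Before round `k` only rows of (zero-based) index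
`≥ k - 1` have boxes with several entries, so the new boxes of round `k` lie in rows of index
`≥ k`, and the labels form a filling of the grown skew shape `μ / λ` of the kind counted by
`g_{λ,μ}`. The entries of row `r` are at least `r + 1`, so once `k` exceeds every entry all boxes
are singletons: we are left with an ordinary tableau of shape `μ` and the same content. Each
round is undone by letting every box keep its maximum and sending its other entries, together
with the boxes labelled `k`, back up one row, each into the rightmost box whose maximum is
smaller.
-/

theorem Nat.card_sigma_eq_finsum {α : Type*} {β : α → Type*} [Finite (Σ a, β a)] :
    Nat.card (Σ a, β a) = ∑ᶠ a, Nat.card (β a) := by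
  classical
  have : Finite {a // Nonempty (β a)} :=
    Finite.of_surjective (fun p : Σ a, β a => ⟨p.1, ⟨p.2⟩⟩) fun ⟨a, ⟨b⟩⟩ =>
      ⟨⟨a, b⟩, rfl⟩
  have (a : α) : Finite (β a) := Finite.of_injective (Sigma.mk a) sigma_mk_injective
  have := Fintype.ofFinite {a // Nonempty (β a)}
  rw [← Nat.card_congr (Equiv.sigmaSubtypeEquivOfSubset β (fun a => Nonempty (β a))
      fun _ b => ⟨b⟩), Nat.card_sigma, ← finsum_eq_sum_of_fintype,
    finsum_subtype_eq_finsum_cond (f := fun a => Nat.card (β a)) (fun a => Nonempty (β a))]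
  refine finsum_congr fun a => ?_
  rw [finsum_eq_if]
  split_ifs with h
  · rfl
  · rw [not_nonempty_iff] at h
    exact Nat.card_of_isEmpty.symm

lemma IsPartitionFn.finite_boxes {f : ℕ → ℕ} (hf : IsPartitionFn f) :
    {p : ℕ × ℕ | p.2 < f p.1}.Finite := by
  obtain ⟨N, hN⟩ := hf.2
  refine ((Set.finite_Iio N).prod (Set.finite_Iio (f 0))).subset fun p hp => ⟨?_, ?_⟩
  · by_contra hp'
    have := hN p.1 (not_lt.mp hp')
    simp only [Set.mem_ofPred_eq] at hp
    omega
  · exact hp.trans_le (hf.1 0 p.1 (Nat.zero_le _))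

lemma SVYT.box_injective {lam : ℕ → ℕ} : Function.Injective (SVYT.box (lam := lam)) := by
  rintro ⟨⟩ ⟨⟩ h
  congr

lemma SSYT.entry_injective {mu : ℕ → ℕ} : Function.Injective (SSYT.entry (mu := mu)) := by
  rintro ⟨⟩ ⟨⟩ h
  congr

lemma SSYT.succ_le_entry {mu : ℕ → ℕ} (hmu : IsPartitionFn mu) (T : SSYT mu) :
    ∀ i j, j < mu i → i + 1 ≤ T.entry i j := by
  intro i
  induction i with
  | zero => exact T.pos 0
  | succ n ih =>
    intro j hj
    have := ih j (hj.trans_le (hmu.1 n (n + 1) (Nat.le_succ n)))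
    have := T.cols n j hj
    omega

lemma SSYT.entry_lt {mu δ : ℕ → ℕ} {N : ℕ} (hmu : IsPartitionFn mu) (T : SSYT mu)
    (hT : ∀ v, 1 ≤ v → T.content v = δ v) (hN : ∀ v, N ≤ v → δ v = 0) {i j : ℕ}
    (hj : j < mu i) : T.entry i j < N := by
  have hne : T.content (T.entry i j) ≠ 0 :=
    Set.ncard_ne_zero_of_mem (a := (i, j)) ⟨hj, rfl⟩
      (hmu.finite_boxes.subset fun _ hp => hp.1)
  by_contra hge
  exact hne ((hT _ (T.pos i j hj)).trans (hN _ (not_lt.mp hge)))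

namespace Lenart

def nmin (S : Finset ℕ) : ℕ := if h : S.Nonempty then S.min' h else 0

def nmax (S : Finset ℕ) : ℕ := if h : S.Nonempty then S.max' h else 0

lemma nmin_mem {S : Finset ℕ} (h : S.Nonempty) : nmin S ∈ S := by
  rw [nmin, dif_pos h]; exact S.min'_mem h

lemma nmax_mem {S : Finset ℕ} (h : S.Nonempty) : nmax S ∈ S := by
  rw [nmax, dif_pos h]; exact S.max'_mem h

lemma nmin_le {S : Finset ℕ} {a : ℕ} (ha : a ∈ S) : nmin S ≤ a := by
  rw [nmin, dif_pos ⟨a, ha⟩]; exact S.min'_le a ha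

lemma le_nmax {S : Finset ℕ} {a : ℕ} (ha : a ∈ S) : a ≤ nmax S := by
  rw [nmax, dif_pos ⟨a, ha⟩]; exact S.le_max' a ha

lemma nmin_lt_of_mem_of_ne {S : Finset ℕ} {a : ℕ} (ha : a ∈ S) (hne : a ≠ nmin S) :
    nmin S < a :=
  lt_of_le_of_ne (nmin_le ha) (Ne.symm hne)

lemma lt_nmax_of_mem_of_ne {S : Finset ℕ} {a : ℕ} (ha : a ∈ S) (hne : a ≠ nmax S) :
    a < nmax S :=
  lt_of_le_of_ne (le_nmax ha) hne

lemma nmin_singleton (a : ℕ) : nmin {a} = a := by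
  rw [nmin, dif_pos (Finset.singleton_nonempty a), Finset.min'_singleton]

lemma nmax_singleton (a : ℕ) : nmax {a} = a := by
  rw [nmax, dif_pos (Finset.singleton_nonempty a), Finset.max'_singleton]

lemma nmin_insert_of_lt {m : ℕ} {X : Finset ℕ} (hX : ∀ x ∈ X, m < x) :
    nmin (insert m X) = m := by
  refine le_antisymm (nmin_le (Finset.mem_insert_self m X)) ?_
  rcases Finset.mem_insert.mp (nmin_mem (Finset.insert_nonempty m X)) with he | hx
  · exact he.ge
  · exact (hX _ hx).le

lemma nmax_insert_of_lt {m : ℕ} {X : Finset ℕ} (hX : ∀ x ∈ X, x < m) :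
    nmax (insert m X) = m := by
  refine le_antisymm ?_ (le_nmax (Finset.mem_insert_self m X))
  rcases Finset.mem_insert.mp (nmax_mem (Finset.insert_nonempty m X)) with he | hx
  · exact he.le
  · exact (hX _ hx).le

/-- An intermediate stage of the bijection: a set-valued filling of the diagram of `shape`
together with labels on the boxes of `shape / λ`. -/
@[ext] structure State where
  shape : ℕ → ℕ
  cell : ℕ → ℕ → Finset ℕ
  label : ℕ → ℕ → ℕ

def support (s : State) (v : ℕ) : Set (ℕ × ℕ) :=
  {p | p.2 < s.shape p.1 ∧ v ∈ s.cell p.1 p.2}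

noncomputable def State.content (s : State) (v : ℕ) : ℕ := (support s v).ncard

/-- The invariant after `k` rounds; besides the tableau and filling conditions, the labels are
at most `k` and only rows `≥ k` have boxes with more than one entry. -/
structure Valid (lam : ℕ → ℕ) (k : ℕ) (s : State) : Prop where
  antitone : Antitone s.shape
  eventually_zero : ∃ N, ∀ m, N ≤ m → s.shape m = 0
  le_shape : ∀ i, lam i ≤ s.shape i
  nonempty : ∀ i j, j < s.shape i → (s.cell i j).Nonempty
  pos : ∀ i j, ∀ e ∈ s.cell i j, 1 ≤ e
  cell_eq_empty : ∀ i j, s.shape i ≤ j → s.cell i j = ∅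
  rows : ∀ i j, j + 1 < s.shape i → ∀ a ∈ s.cell i j, ∀ b ∈ s.cell i (j + 1), a ≤ b
  cols : ∀ i j, j < s.shape (i + 1) → ∀ a ∈ s.cell i j, ∀ b ∈ s.cell (i + 1) j, a < b
  label_mem : ∀ i j, lam i ≤ j → j < s.shape i →
    1 ≤ s.label i j ∧ s.label i j ≤ i ∧ s.label i j ≤ k
  label_eq_zero : ∀ i j, (j < lam i ∨ s.shape i ≤ j) → s.label i j = 0
  label_row : ∀ i j, lam i ≤ j → j + 1 < s.shape i → s.label i j < s.label i (j + 1)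
  label_col : ∀ i j, lam i ≤ j → lam (i + 1) ≤ j → j < s.shape (i + 1) →
    s.label i j < s.label (i + 1) j
  le_row_of_lt : ∀ i j a b, a ∈ s.cell i j → b ∈ s.cell i j → a < b → k ≤ i

namespace Valid

variable {lam : ℕ → ℕ} {k : ℕ} {s : State}

lemma shape_succ_le (h : Valid lam k s) (i : ℕ) : s.shape (i + 1) ≤ s.shape i :=
  h.antitone (Nat.le_succ i)

lemma le_nmin_succ (h : Valid lam k s) {i j a : ℕ} (hj : j + 1 < s.shape i)
    (ha : a ∈ s.cell i j) : a ≤ nmin (s.cell i (j + 1)) :=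
  h.rows i j hj a ha _ (nmin_mem (h.nonempty i (j + 1) hj))

lemma nmax_le_nmin_succ (h : Valid lam k s) {i j : ℕ} (hj : j + 1 < s.shape i) :
    nmax (s.cell i j) ≤ nmin (s.cell i (j + 1)) :=
  h.le_nmin_succ hj (nmax_mem (h.nonempty i j (by omega)))

lemma nmin_mono (h : Valid lam k s) {i j j' : ℕ} (hjj : j ≤ j') (hj' : j' < s.shape i) :
    nmin (s.cell i j) ≤ nmin (s.cell i j') := by
  induction j', hjj using Nat.le_induction with
  | base => exact le_rfl
  | succ n hn ih =>
    exact (ih (by omega)).trans (h.le_nmin_succ hj' (nmin_mem (h.nonempty i n (by omega))))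

lemma nmax_mono (h : Valid lam k s) {i j j' : ℕ} (hjj : j ≤ j') (hj' : j' < s.shape i) :
    nmax (s.cell i j) ≤ nmax (s.cell i j') := by
  induction j', hjj using Nat.le_induction with
  | base => exact le_rfl
  | succ n hn ih =>
    exact (ih (by omega)).trans ((h.nmax_le_nmin_succ hj').trans
      (le_nmax (nmin_mem (h.nonempty i (n + 1) hj'))))

lemma le_nmin_of_lt (h : Valid lam k s) {i j j' a : ℕ} (hjj : j < j') (hj' : j' < s.shape i)
    (ha : a ∈ s.cell i j) : a ≤ nmin (s.cell i j') :=
  (h.le_nmin_succ (by omega) ha).trans (h.nmin_mono hjj hj')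

lemma nmax_le_of_lt (h : Valid lam k s) {i j j' b : ℕ} (hjj : j < j') (hj' : j' < s.shape i)
    (hb : b ∈ s.cell i j') : nmax (s.cell i j) ≤ b :=
  h.le_nmin_of_lt hjj hj' (nmax_mem (h.nonempty i j (by omega))) |>.trans (nmin_le hb)

lemma exists_cell_eq_singleton (h : Valid lam k s) {i j : ℕ} (hi : i < k)
    (hj : j < s.shape i) : ∃ a, s.cell i j = {a} := by
  obtain ⟨a, ha⟩ := h.nonempty i j hj
  refine ⟨a, Finset.eq_singleton_iff_unique_mem.mpr ⟨ha, fun b hb => ?_⟩⟩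
  by_contra hne
  rcases Nat.lt_or_gt_of_ne hne with hlt | hlt
  · exact absurd (h.le_row_of_lt i j b a hb ha hlt) (not_le.mpr hi)
  · exact absurd (h.le_row_of_lt i j a b ha hb hlt) (not_le.mpr hi)

lemma label_mono (h : Valid lam k s) {i j j' : ℕ} (hl : lam i ≤ j) (hjj : j ≤ j')
    (hj' : j' < s.shape i) : s.label i j ≤ s.label i j' := by
  induction j', hjj using Nat.le_induction with
  | base => exact le_rfl
  | succ n hn ih => exact (ih (by omega)).trans (h.label_row i n (by omega) hj').le

lemma succ_le_of_mem (h : Valid lam k s) :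
    ∀ i j a, j < s.shape i → a ∈ s.cell i j → i + 1 ≤ a := by
  intro i
  induction i with
  | zero => exact fun j a _ ha => h.pos 0 j a ha
  | succ n ih =>
    intro j a hj ha
    have hjn : j < s.shape n := hj.trans_le (h.shape_succ_le n)
    obtain ⟨b, hb⟩ := h.nonempty n j hjn
    have := ih j b hjn hb
    have := h.cols n j hj b hb a ha
    omega

end Valid

def excess (s : State) (r : ℕ) : Finset ℕ :=
  (Finset.range (s.shape r)).biUnion fun c => (s.cell r c).erase (nmin (s.cell r c))

open scoped Classical in
/-- The excess entries of the row above that land in box `(r, j)` during a round. -/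
noncomputable def incoming (s : State) : ℕ → ℕ → Finset ℕ
  | 0, _ => ∅
  | r + 1, j => (excess s r).filter fun x =>
      (∀ a ∈ s.cell (r + 1) j, x < a) ∧ ∀ j' < j, ∃ a ∈ s.cell (r + 1) j', a ≤ x

open scoped Classical in
/-- The excess entries of the row above that fit in no box of row `r`. -/
noncomputable def newBox (s : State) : ℕ → Finset ℕ
  | 0 => ∅
  | r + 1 => (excess s r).filter fun x =>
      ∀ j < s.shape (r + 1), ∃ a ∈ s.cell (r + 1) j, a ≤ x

noncomputable def descend (k : ℕ) (s : State) : State where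
  shape r := s.shape r + if (newBox s r).Nonempty then 1 else 0
  cell r j :=
    if j < s.shape r then insert (nmin (s.cell r j)) (incoming s r j)
    else if j = s.shape r ∧ (newBox s r).Nonempty then newBox s r else ∅
  label r j := if j = s.shape r ∧ (newBox s r).Nonempty then k else s.label r j

section Descend

variable {s : State} {k r j x : ℕ}

lemma mem_excess :
    x ∈ excess s r ↔ ∃ c < s.shape r, x ∈ s.cell r c ∧ nmin (s.cell r c) < x := by
  simp only [excess, Finset.mem_biUnion, Finset.mem_range, Finset.mem_erase]
  constructor
  · rintro ⟨c, hc, hne, hx⟩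
    exact ⟨c, hc, hx, nmin_lt_of_mem_of_ne hx hne⟩
  · rintro ⟨c, hc, hx, hm⟩
    exact ⟨c, hc, hm.ne', hx⟩

@[simp] lemma incoming_zero : incoming s 0 j = ∅ := rfl

@[simp] lemma newBox_zero : newBox s 0 = ∅ := rfl

lemma mem_incoming_succ : x ∈ incoming s (r + 1) j ↔ x ∈ excess s r ∧
    (∀ a ∈ s.cell (r + 1) j, x < a) ∧ ∀ j' < j, ∃ a ∈ s.cell (r + 1) j', a ≤ x := by
  simp [incoming]

lemma mem_newBox_succ : x ∈ newBox s (r + 1) ↔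
    x ∈ excess s r ∧ ∀ j < s.shape (r + 1), ∃ a ∈ s.cell (r + 1) j, a ≤ x := by
  simp [newBox]

lemma lt_descend_shape_iff :
    j < (descend k s).shape r ↔ j < s.shape r ∨ (j = s.shape r ∧ (newBox s r).Nonempty) := by
  simp only [descend]
  split_ifs with hb <;> simp only [hb, and_true, and_false, or_false] <;> omega

lemma le_descend_shape : s.shape r ≤ (descend k s).shape r :=
  Nat.le_add_right _ _

lemma descend_shape_of_nonempty (hb : (newBox s r).Nonempty) :
    (descend k s).shape r = s.shape r + 1 := by
  simp [descend, hb]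

lemma descend_shape_of_not_nonempty (hb : ¬ (newBox s r).Nonempty) :
    (descend k s).shape r = s.shape r := by
  simp [descend, hb]

lemma descend_cell_of_lt (hj : j < s.shape r) :
    (descend k s).cell r j = insert (nmin (s.cell r j)) (incoming s r j) := by
  simp [descend, hj]

lemma descend_cell_shape (hb : (newBox s r).Nonempty) :
    (descend k s).cell r (s.shape r) = newBox s r := by
  simp [descend, hb]

lemma mem_descend_cell : x ∈ (descend k s).cell r j ↔
    (j < s.shape r ∧ (x = nmin (s.cell r j) ∨ x ∈ incoming s r j)) ∨
      (j = s.shape r ∧ x ∈ newBox s r) := by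
  simp only [descend]
  split_ifs with h₁ h₂
  · simp only [Finset.mem_insert, h₁, true_and]
    grind
  · simp [h₂.1]
  · simp only [Finset.notMem_empty, false_iff, not_or, not_and]
    exact ⟨fun h => absurd h h₁, fun he hx => h₂ ⟨he, x, hx⟩⟩

lemma descend_cell_of_le (hj : (descend k s).shape r ≤ j) : (descend k s).cell r j = ∅ := by
  ext x
  simp only [mem_descend_cell, Finset.notMem_empty, iff_false]
  have := lt_descend_shape_iff (k := k) (s := s) (r := r) (j := j)
  grind

lemma descend_label_of_not (hj : ¬ (j = s.shape r ∧ (newBox s r).Nonempty)) :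
    (descend k s).label r j = s.label r j :=
  if_neg hj

lemma descend_label_shape (hb : (newBox s r).Nonempty) :
    (descend k s).label r (s.shape r) = k := by
  simp [descend, hb]

lemma descend_label_of_lt (hj : j < s.shape r) : (descend k s).label r j = s.label r j :=
  descend_label_of_not fun h => hj.ne h.1

variable {lam : ℕ → ℕ} {k' : ℕ} (h : Valid lam k s)
include h

lemma Valid.le_row_of_mem_excess (hx : x ∈ excess s r) : k ≤ r := by
  obtain ⟨c, -, hx, hm⟩ := mem_excess.mp hx
  exact h.le_row_of_lt r c _ _ (nmin_mem ⟨x, hx⟩) hx hm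

lemma Valid.lt_nmin_of_mem_incoming (hj : j < s.shape r) (hx : x ∈ incoming s r j) :
    x < nmin (s.cell r j) := by
  cases r with
  | zero => simp at hx
  | succ r => exact (mem_incoming_succ.mp hx).2.1 _ (nmin_mem (h.nonempty _ j hj))

lemma Valid.exists_of_mem_incoming (hx : x ∈ incoming s (r + 1) j) :
    ∃ c, j ≤ c ∧ c < s.shape r ∧ x ∈ s.cell r c ∧ nmin (s.cell r c) < x := by
  obtain ⟨hex, -, hleft⟩ := mem_incoming_succ.mp hx
  obtain ⟨c, hc, hxc, hm⟩ := mem_excess.mp hex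
  refine ⟨c, not_lt.mp fun hcj => ?_, hc, hxc, hm⟩
  obtain ⟨a, hac, hax⟩ := hleft c hcj
  have hcn : c < s.shape (r + 1) := by
    by_contra hn
    simp [h.cell_eq_empty (r + 1) c (not_lt.mp hn)] at hac
  exact (h.cols r c hcn x hxc a hac).not_ge hax

lemma Valid.exists_of_mem_newBox (hx : x ∈ newBox s (r + 1)) :
    ∃ c, s.shape (r + 1) ≤ c ∧ c < s.shape r ∧ x ∈ s.cell r c ∧
      nmin (s.cell r c) < x := by
  obtain ⟨hex, hall⟩ := mem_newBox_succ.mp hx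
  obtain ⟨c, hc, hxc, hm⟩ := mem_excess.mp hex
  refine ⟨c, not_lt.mp fun hcj => ?_, hc, hxc, hm⟩
  obtain ⟨a, hac, hax⟩ := hall c hcj
  exact (h.cols r c hcj x hxc a hac).not_ge hax

lemma Valid.shape_succ_lt_of_newBox (hb : (newBox s (r + 1)).Nonempty) :
    s.shape (r + 1) < s.shape r := by
  obtain ⟨x, hx⟩ := hb
  obtain ⟨c, hc₁, hc₂, -⟩ := h.exists_of_mem_newBox hx
  omega

lemma Valid.descend_shape_succ_le : (descend k' s).shape (r + 1) ≤ s.shape r := by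
  by_cases hb : (newBox s (r + 1)).Nonempty
  · rw [descend_shape_of_nonempty hb]; exact h.shape_succ_lt_of_newBox hb
  · rw [descend_shape_of_not_nonempty hb]; exact h.shape_succ_le r

lemma Valid.succ_le_of_newBox (hb : (newBox s r).Nonempty) : k + 1 ≤ r := by
  cases r with
  | zero => simp at hb
  | succ r =>
    obtain ⟨x, hx⟩ := hb
    exact Nat.succ_le_succ (h.le_row_of_mem_excess (mem_newBox_succ.mp hx).1)

lemma Valid.succ_le_of_incoming (hx : x ∈ incoming s r j) : k + 1 ≤ r := by
  cases r with
  | zero => simp at hx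
  | succ r => exact Nat.succ_le_succ (h.le_row_of_mem_excess (mem_incoming_succ.mp hx).1)

lemma Valid.pos_of_mem_descend_cell (hx : x ∈ (descend k' s).cell r j) : 1 ≤ x := by
  rcases mem_descend_cell.mp hx with ⟨hj, rfl | hx⟩ | ⟨-, hx⟩
  · exact h.pos r j _ (nmin_mem (h.nonempty r j hj))
  · cases r with
    | zero => simp at hx
    | succ r =>
      obtain ⟨c, -, -, hxc, -⟩ := h.exists_of_mem_incoming hx
      exact h.pos r c x hxc
  · cases r with
    | zero => simp at hx
    | succ r =>
      obtain ⟨c, -, -, hxc, -⟩ := h.exists_of_mem_newBox hx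
      exact h.pos r c x hxc

lemma Valid.le_nmin_of_mem_descend_cell (hj : j < s.shape r)
    (hx : x ∈ (descend k' s).cell r j) : x ≤ nmin (s.cell r j) := by
  rw [descend_cell_of_lt hj] at hx
  rcases Finset.mem_insert.mp hx with rfl | hx
  · exact le_rfl
  · exact (h.lt_nmin_of_mem_incoming hj hx).le

lemma Valid.nmin_le_of_mem_descend_cell_succ (hj : j + 1 < (descend k' s).shape r)
    (hx : x ∈ (descend k' s).cell r (j + 1)) : nmin (s.cell r j) ≤ x := by
  have hjs : j < s.shape r := by rcases lt_descend_shape_iff.mp hj with hj | hj <;> omega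
  have left_of (y : ℕ) (hy : ∃ a ∈ s.cell r j, a ≤ y) : nmin (s.cell r j) ≤ y := by
    obtain ⟨a, ha, hay⟩ := hy
    exact (nmin_le ha).trans hay
  rcases mem_descend_cell.mp hx with ⟨hj', rfl | hx⟩ | ⟨hj', hx⟩
  · exact h.nmin_mono (Nat.le_succ j) hj'
  · cases r with
    | zero => simp at hx
    | succ r => exact left_of x ((mem_incoming_succ.mp hx).2.2 j (Nat.lt_succ_self j))
  · cases r with
    | zero => simp at hx
    | succ r => exact left_of x ((mem_newBox_succ.mp hx).2 j hjs)

lemma Valid.nmin_lt_of_mem_descend_cell_succ (hx : x ∈ (descend k' s).cell (r + 1) j) :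
    j < s.shape r ∧ nmin (s.cell r j) < x := by
  rcases mem_descend_cell.mp hx with ⟨hj, rfl | hinc⟩ | ⟨rfl, hnew⟩
  · have hjr := hj.trans_le (h.shape_succ_le r)
    exact ⟨hjr, h.cols r j hj _ (nmin_mem (h.nonempty r j hjr)) _
      (nmin_mem (h.nonempty (r + 1) j hj))⟩
  · obtain ⟨c, hjc, hc, -, hm⟩ := h.exists_of_mem_incoming hinc
    exact ⟨hjc.trans_lt hc, (h.nmin_mono hjc hc).trans_lt hm⟩
  · obtain ⟨c, hjc, hc, -, hm⟩ := h.exists_of_mem_newBox hnew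
    exact ⟨hjc.trans_lt hc, (h.nmin_mono hjc hc).trans_lt hm⟩

end Descend

section DescendValid

variable {lam : ℕ → ℕ} {k k' : ℕ} {s : State}

lemma Valid.descend_rows (h : Valid lam k s) (i j : ℕ) (hj : j + 1 < (descend k' s).shape i)
    (a : ℕ) (ha : a ∈ (descend k' s).cell i j) (b : ℕ)
    (hb : b ∈ (descend k' s).cell i (j + 1)) :
    a ≤ b := by
  have hji : j < s.shape i := by rcases lt_descend_shape_iff.mp hj with hj | hj <;> omega
  exact (h.le_nmin_of_mem_descend_cell hji ha).trans (h.nmin_le_of_mem_descend_cell_succ hj hb)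

lemma Valid.descend_cols (h : Valid lam k s) (i j : ℕ) (a : ℕ)
    (ha : a ∈ (descend k' s).cell i j) (b : ℕ) (hb : b ∈ (descend k' s).cell (i + 1) j) :
    a < b := by
  obtain ⟨hji, hlt⟩ := h.nmin_lt_of_mem_descend_cell_succ hb
  exact (h.le_nmin_of_mem_descend_cell hji ha).trans_lt hlt

lemma Valid.descend_label_mem (h : Valid lam k s) (i j : ℕ) (hi : lam i ≤ j)
    (hj : j < (descend (k + 1) s).shape i) :
    1 ≤ (descend (k + 1) s).label i j ∧ (descend (k + 1) s).label i j ≤ i ∧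
      (descend (k + 1) s).label i j ≤ k + 1 := by
  rcases lt_descend_shape_iff.mp hj with hj | ⟨rfl, hb⟩
  · rw [descend_label_of_lt hj]
    obtain ⟨h₁, h₂, h₃⟩ := h.label_mem i j hi hj
    exact ⟨h₁, h₂, by omega⟩
  · rw [descend_label_shape hb]
    exact ⟨by omega, h.succ_le_of_newBox hb, le_rfl⟩

lemma Valid.descend_label_eq_zero (h : Valid lam k s) (i j : ℕ)
    (hj : j < lam i ∨ (descend k' s).shape i ≤ j) : (descend k' s).label i j = 0 := by
  have hli := h.le_shape i
  by_cases hb : j = s.shape i ∧ (newBox s i).Nonempty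
  · rw [descend_shape_of_nonempty hb.2] at hj
    omega
  · rw [descend_label_of_not hb]
    have := le_descend_shape (k := k') (s := s) (r := i)
    exact h.label_eq_zero i j (by omega)

lemma Valid.descend_label_row (h : Valid lam k s) (i j : ℕ) (hi : lam i ≤ j)
    (hj : j + 1 < (descend (k + 1) s).shape i) :
    (descend (k + 1) s).label i j < (descend (k + 1) s).label i (j + 1) := by
  have hji : j < s.shape i := by rcases lt_descend_shape_iff.mp hj with hj | hj <;> omega
  rw [descend_label_of_lt hji]
  rcases lt_descend_shape_iff.mp hj with hj | ⟨hje, hb⟩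
  · rw [descend_label_of_lt hj]
    exact h.label_row i j hi hj
  · rw [hje, descend_label_shape hb]
    have := (h.label_mem i j hi hji).2.2
    omega

lemma Valid.descend_label_col (h : Valid lam k s) (i j : ℕ) (hi : lam i ≤ j)
    (hi' : lam (i + 1) ≤ j) (hj : j < (descend (k + 1) s).shape (i + 1)) :
    (descend (k + 1) s).label i j < (descend (k + 1) s).label (i + 1) j := by
  have hji : j < s.shape i := hj.trans_le h.descend_shape_succ_le
  rw [descend_label_of_lt hji]
  rcases lt_descend_shape_iff.mp hj with hj | ⟨rfl, hb⟩
  · rw [descend_label_of_lt hj]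
    exact h.label_col i _ hi hi' hj
  · rw [descend_label_shape hb]
    have := (h.label_mem i _ hi hji).2.2
    omega

lemma Valid.descend_le_row_of_lt (h : Valid lam k s) (i j a b : ℕ)
    (ha : a ∈ (descend k' s).cell i j) (hb : b ∈ (descend k' s).cell i j) (hab : a < b) :
    k + 1 ≤ i := by
  rcases mem_descend_cell.mp ha with ⟨hj, rfl | ha⟩ | ⟨-, ha⟩
  · rcases mem_descend_cell.mp hb with ⟨-, rfl | hb⟩ | ⟨hj', -⟩
    · exact absurd hab (lt_irrefl _)
    · exact h.succ_le_of_incoming hb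
    · omega
  · exact h.succ_le_of_incoming ha
  · exact h.succ_le_of_newBox ⟨a, ha⟩

theorem valid_descend (h : Valid lam k s) : Valid lam (k + 1) (descend (k + 1) s) where
  antitone := antitone_nat_of_succ_le fun r =>
    h.descend_shape_succ_le.trans le_descend_shape
  eventually_zero := by
    obtain ⟨N, hN⟩ := h.eventually_zero
    refine ⟨N + 1, fun m hm => ?_⟩
    obtain ⟨m, rfl⟩ : ∃ m', m = m' + 1 := ⟨m - 1, by omega⟩
    have := h.descend_shape_succ_le (k' := k + 1) (r := m)
    have := hN m (by omega)
    omega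
  le_shape i := (h.le_shape i).trans le_descend_shape
  nonempty i j hj := by
    rcases lt_descend_shape_iff.mp hj with hj | ⟨rfl, hb⟩
    · exact ⟨_, mem_descend_cell.mpr (Or.inl ⟨hj, Or.inl rfl⟩)⟩
    · rwa [descend_cell_shape hb]
  pos i j := fun _ he => h.pos_of_mem_descend_cell he
  cell_eq_empty i j := descend_cell_of_le
  rows := h.descend_rows
  cols i j _ := h.descend_cols i j
  label_mem := h.descend_label_mem
  label_eq_zero := h.descend_label_eq_zero
  label_row := h.descend_label_row
  label_col := h.descend_label_col
  le_row_of_lt := h.descend_le_row_of_lt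

end DescendValid

section DescendContent

/-- The column of row `r` that an entry `x` arriving from the row above joins. -/
noncomputable def slot (s : State) (r x : ℕ) : ℕ :=
  open scoped Classical in
  if h : ∃ j, j < s.shape r ∧ ∀ a ∈ s.cell r j, x < a then Nat.find h else s.shape r

variable {s : State} {r x : ℕ}

lemma slot_spec (hx : x ∈ excess s r) :
    (slot s (r + 1) x < s.shape (r + 1) ∧ x ∈ incoming s (r + 1) (slot s (r + 1) x)) ∨
      (slot s (r + 1) x = s.shape (r + 1) ∧ x ∈ newBox s (r + 1)) := by
  classical
  unfold slot
  split_ifs with hP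
  · obtain ⟨hj, hbelow⟩ := Nat.find_spec hP
    refine Or.inl ⟨hj, mem_incoming_succ.mpr ⟨hx, hbelow, fun j' hj' => ?_⟩⟩
    have := Nat.find_min hP hj'
    push Not at this
    exact this (hj'.trans hj)
  · push Not at hP
    exact Or.inr ⟨rfl, mem_newBox_succ.mpr ⟨hx, hP⟩⟩

lemma slot_eq_of_mem_incoming {j : ℕ} (hx : x ∈ incoming s (r + 1) j)
    (hj : j < s.shape (r + 1)) :
    slot s (r + 1) x = j := by
  obtain ⟨hex, hbelow, hleft⟩ := mem_incoming_succ.mp hx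
  rcases slot_spec hex with ⟨hlt, hx'⟩ | ⟨-, hx'⟩
  · obtain ⟨-, hbelow', hleft'⟩ := mem_incoming_succ.mp hx'
    by_contra hne
    rcases Nat.lt_or_gt_of_ne hne with hlt' | hlt'
    · obtain ⟨a, ha, hax⟩ := hleft _ hlt'
      exact (hbelow' a ha).not_ge hax
    · obtain ⟨a, ha, hax⟩ := hleft' _ hlt'
      exact (hbelow a ha).not_ge hax
  · obtain ⟨a, ha, hax⟩ := (mem_newBox_succ.mp hx').2 j hj
    exact absurd (hbelow a ha) hax.not_gt

lemma slot_eq_of_mem_newBox (hx : x ∈ newBox s (r + 1)) : slot s (r + 1) x = s.shape (r + 1) := by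
  rcases slot_spec (mem_newBox_succ.mp hx).1 with ⟨hlt, hx'⟩ | ⟨he, -⟩
  · obtain ⟨a, ha, hax⟩ := (mem_newBox_succ.mp hx).2 _ hlt
    exact absurd ((mem_incoming_succ.mp hx').2.1 a ha) hax.not_gt
  · exact he

/-- Where an entry `v` of box `p` sits after a round. -/
noncomputable def moveTo (s : State) (v : ℕ) (p : ℕ × ℕ) : ℕ × ℕ :=
  if v = nmin (s.cell p.1 p.2) then p else (p.1 + 1, slot s (p.1 + 1) v)

variable {lam : ℕ → ℕ} {k k' : ℕ}

lemma Valid.eq_of_mem_excess (h : Valid lam k s) {j j' : ℕ} (hj : j < s.shape r)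
    (hj' : j' < s.shape r) (hx : x ∈ s.cell r j) (hx' : x ∈ s.cell r j')
    (hm : nmin (s.cell r j) < x) (hm' : nmin (s.cell r j') < x) : j = j' := by
  by_contra hne
  rcases Nat.lt_or_gt_of_ne hne with hlt | hlt
  · exact (h.le_nmin_of_lt hlt hj' hx).not_gt hm'
  · exact (h.le_nmin_of_lt hlt hj hx').not_gt hm

lemma moveTo_mem_support_descend {v : ℕ} {p : ℕ × ℕ} (hp : p ∈ support s v) :
    moveTo s v p ∈ support (descend k' s) v := by
  obtain ⟨hj, hv⟩ := hp
  unfold moveTo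
  split_ifs with hmin
  · exact ⟨hj.trans_le le_descend_shape, mem_descend_cell.mpr (Or.inl ⟨hj, Or.inl hmin⟩)⟩
  · have hex : v ∈ excess s p.1 := mem_excess.mpr ⟨p.2, hj, hv, nmin_lt_of_mem_of_ne hv hmin⟩
    rcases slot_spec hex with ⟨hlt, hin⟩ | ⟨he, hnew⟩
    · exact ⟨hlt.trans_le le_descend_shape,
        mem_descend_cell.mpr (Or.inl ⟨hlt, Or.inr hin⟩)⟩
    · refine ⟨?_, mem_descend_cell.mpr (Or.inr ⟨he, hnew⟩)⟩
      rw [he, descend_shape_of_nonempty ⟨v, hnew⟩]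
      exact Nat.lt_succ_self _

lemma Valid.injOn_moveTo (h : Valid lam k s) (v : ℕ) : Set.InjOn (moveTo s v) (support s v) := by
  have moved_ne (p q : ℕ × ℕ) (hp : p ∈ support s v) (hq : q ∈ support s v)
      (hpm : v = nmin (s.cell p.1 p.2)) (hqm : v ≠ nmin (s.cell q.1 q.2)) :
      p ≠ (q.1 + 1, slot s (q.1 + 1) v) := by
    rintro rfl
    rcases slot_spec (mem_excess.mpr ⟨q.2, hq.1, hq.2, nmin_lt_of_mem_of_ne hq.2 hqm⟩) with
      ⟨-, hin⟩ | ⟨he, -⟩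
    · exact (mem_incoming_succ.mp hin).2.1 v hp.2 |>.ne rfl
    · exact hp.1.ne he
  intro p hp q hq hpq
  unfold moveTo at hpq
  split_ifs at hpq with hpm hqm hqm
  · exact hpq
  · exact absurd hpq (moved_ne p q hp hq hpm hqm)
  · exact absurd hpq.symm (moved_ne q p hq hp hqm hpm)
  · obtain ⟨hi, -⟩ := Prod.mk.inj hpq
    have hi : p.1 = q.1 := by omega
    have hj := h.eq_of_mem_excess hp.1 (hi ▸ hq.1) hp.2 (hi ▸ hq.2)
      (nmin_lt_of_mem_of_ne hp.2 hpm) (nmin_lt_of_mem_of_ne (hi ▸ hq.2) (hi ▸ hqm))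
    exact Prod.ext hi hj

lemma Valid.support_descend_subset_image (h : Valid lam k s) (v : ℕ) :
    support (descend k' s) v ⊆ moveTo s v '' support s v := by
  rintro ⟨r, c⟩ ⟨-, hv⟩
  dsimp only at hv
  rcases mem_descend_cell.mp hv with ⟨hc, rfl | hin⟩ | ⟨rfl, hnew⟩
  · exact ⟨(r, c), ⟨hc, nmin_mem (h.nonempty r c hc)⟩, if_pos rfl⟩
  · cases r with
    | zero => simp at hin
    | succ r =>
      obtain ⟨c', hc', hvc', hm⟩ := mem_excess.mp (mem_incoming_succ.mp hin).1
      refine ⟨(r, c'), ⟨hc', hvc'⟩, ?_⟩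
      simp only [moveTo, if_neg hm.ne', slot_eq_of_mem_incoming hin hc]
  · cases r with
    | zero => simp at hnew
    | succ r =>
      obtain ⟨c', hc', hvc', hm⟩ := mem_excess.mp (mem_newBox_succ.mp hnew).1
      refine ⟨(r, c'), ⟨hc', hvc'⟩, ?_⟩
      simp only [moveTo, if_neg hm.ne', slot_eq_of_mem_newBox hnew]

theorem Valid.descend_content (h : Valid lam k s) (v : ℕ) :
    (descend k' s).content v = s.content v := by
  have himage : moveTo s v '' support s v = support (descend k' s) v :=
    subset_antisymm (Set.image_subset_iff.mpr fun _ hp => moveTo_mem_support_descend hp)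
      (h.support_descend_subset_image v)
  rw [State.content, State.content, ← himage,
    (h.injOn_moveTo v).ncard_image]

end DescendContent

def EndsWith (k : ℕ) (s : State) (r : ℕ) : Prop :=
  0 < s.shape r ∧ s.label r (s.shape r - 1) = k

instance (k : ℕ) (s : State) (r : ℕ) : Decidable (EndsWith k s r) :=
  inferInstanceAs (Decidable (_ ∧ _))

/-- The length of row `r` after undoing round `k`. -/
def keptLength (k : ℕ) (s : State) (r : ℕ) : ℕ := s.shape r - if EndsWith k s r then 1 else 0

/-- The entries of row `r` that move up when round `k` is undone: all but the maximum of each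
kept box, and all of a last box labelled `k`. -/
def departing (k : ℕ) (s : State) (r : ℕ) : Finset ℕ :=
  ((Finset.range (keptLength k s r)).biUnion fun c => (s.cell r c).erase (nmax (s.cell r c))) ∪
    (if EndsWith k s r then s.cell r (s.shape r - 1) else ∅)

def ascend (k : ℕ) (s : State) : State where
  shape r := keptLength k s r
  cell r j :=
    if j < keptLength k s r then
      insert (nmax (s.cell r j))
        ((departing k s (r + 1)).filter fun y =>
          nmax (s.cell r j) < y ∧ ∀ c < keptLength k s r, j < c → y ≤ nmax (s.cell r c))
    else ∅
  label r j := if j < keptLength k s r then s.label r j else 0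

section Ascend

variable {s : State} {k r j y : ℕ}

lemma keptLength_le : keptLength k s r ≤ s.shape r := Nat.sub_le _ _

lemma keptLength_of_endsWith (hk : EndsWith k s r) : keptLength k s r = s.shape r - 1 := by
  simp [keptLength, hk]

lemma keptLength_of_not_endsWith (hk : ¬ EndsWith k s r) : keptLength k s r = s.shape r := by
  simp [keptLength, hk]

lemma shape_le_of_not_lt_keptLength (hj : ¬ j < keptLength k s r)
    (hlast : ¬ (EndsWith k s r ∧ j = s.shape r - 1)) : s.shape r ≤ j := by
  by_cases hk : EndsWith k s r
  · rw [keptLength_of_endsWith hk] at hj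
    have : j ≠ s.shape r - 1 := fun he => hlast ⟨hk, he⟩
    omega
  · rwa [keptLength_of_not_endsWith hk, not_lt] at hj

lemma mem_departing : y ∈ departing k s r ↔
    (∃ c < keptLength k s r, y ∈ s.cell r c ∧ y < nmax (s.cell r c)) ∨
      (EndsWith k s r ∧ y ∈ s.cell r (s.shape r - 1)) := by
  simp only [departing, Finset.mem_union, Finset.mem_biUnion, Finset.mem_range, Finset.mem_erase]
  constructor
  · rintro (⟨c, hc, hne, hy⟩ | hy)
    · exact Or.inl ⟨c, hc, hy, lt_nmax_of_mem_of_ne hy hne⟩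
    · split_ifs at hy with hk
      · exact Or.inr ⟨hk, hy⟩
      · simp at hy
  · rintro (⟨c, hc, hy, hlt⟩ | ⟨hk, hy⟩)
    · exact Or.inl ⟨c, hc, hlt.ne, hy⟩
    · exact Or.inr (by rwa [if_pos hk])

lemma ascend_cell_of_lt (hj : j < keptLength k s r) :
    (ascend k s).cell r j = insert (nmax (s.cell r j))
      ((departing k s (r + 1)).filter fun y =>
        nmax (s.cell r j) < y ∧ ∀ c < keptLength k s r, j < c → y ≤ nmax (s.cell r c)) := by
  simp [ascend, hj]

lemma mem_ascend_cell_of_lt (hj : j < keptLength k s r) : y ∈ (ascend k s).cell r j ↔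
    y = nmax (s.cell r j) ∨ (y ∈ departing k s (r + 1) ∧ nmax (s.cell r j) < y ∧
      ∀ c < keptLength k s r, j < c → y ≤ nmax (s.cell r c)) := by
  rw [ascend_cell_of_lt hj, Finset.mem_insert, Finset.mem_filter]

lemma nmax_le_of_mem_ascend_cell (hj : j < keptLength k s r) (hy : y ∈ (ascend k s).cell r j) :
    nmax (s.cell r j) ≤ y := by
  rcases (mem_ascend_cell_of_lt hj).mp hy with rfl | ⟨-, hlt, -⟩
  · exact le_rfl
  · exact hlt.le

lemma nmin_ascend_cell (hj : j < keptLength k s r) :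
    nmin ((ascend k s).cell r j) = nmax (s.cell r j) := by
  rw [ascend_cell_of_lt hj]
  exact nmin_insert_of_lt fun x hx => (Finset.mem_filter.mp hx).2.1

lemma ascend_cell_of_le (hj : keptLength k s r ≤ j) : (ascend k s).cell r j = ∅ := by
  simp [ascend, not_lt.mpr hj]

lemma ascend_label_of_lt (hj : j < keptLength k s r) : (ascend k s).label r j = s.label r j := by
  simp [ascend, hj]

lemma ascend_label_of_le (hj : keptLength k s r ≤ j) : (ascend k s).label r j = 0 := by
  simp [ascend, not_lt.mpr hj]

variable {lam : ℕ → ℕ} (h : Valid lam (k + 1) s)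
include h

lemma Valid.lam_le_of_endsWith (hk : EndsWith (k + 1) s r) : lam r ≤ s.shape r - 1 := by
  by_contra hc
  have := h.label_eq_zero r (s.shape r - 1) (Or.inl (by omega))
  have := hk.2
  omega

lemma Valid.not_endsWith_zero : ¬ EndsWith (k + 1) s 0 := by
  intro hk
  have := (h.label_mem 0 _ (h.lam_le_of_endsWith hk) (by have := hk.1; omega)).2.1
  have := hk.2
  omega

lemma Valid.le_row_of_mem_departing (hy : y ∈ departing (k + 1) s (r + 1)) : k ≤ r := by
  rcases mem_departing.mp hy with ⟨c, -, hyc, hlt⟩ | ⟨hk, -⟩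
  · have := h.le_row_of_lt (r + 1) c y _ hyc (nmax_mem ⟨y, hyc⟩) hlt
    omega
  · have := (h.label_mem (r + 1) _ (h.lam_le_of_endsWith hk) (by have := hk.1; omega)).2.1
    have := hk.2
    omega

variable (hlam : IsPartitionFn lam)
include hlam

/-- A box labelled `k + 1`, the largest label, cannot have a labelled box below it. -/
lemma Valid.shape_succ_lt_of_endsWith (hk : EndsWith (k + 1) s r) :
    s.shape (r + 1) < s.shape r := by
  by_contra hc
  have hl := h.lam_le_of_endsWith hk
  have hl' : lam (r + 1) ≤ s.shape r - 1 := (hlam.1 r (r + 1) (Nat.le_succ r)).trans hl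
  have hlt : s.shape r - 1 < s.shape (r + 1) := by have := hk.1; omega
  have := h.label_col r _ hl hl' hlt
  have := (h.label_mem (r + 1) _ hl' hlt).2.2
  have := hk.2
  omega

lemma Valid.shape_succ_le_keptLength : s.shape (r + 1) ≤ keptLength (k + 1) s r := by
  by_cases hk : EndsWith (k + 1) s r
  · have := h.shape_succ_lt_of_endsWith hlam hk
    rw [keptLength_of_endsWith hk]
    omega
  · rw [keptLength_of_not_endsWith hk]
    exact h.shape_succ_le r

lemma Valid.keptLength_succ_le : keptLength (k + 1) s (r + 1) ≤ keptLength (k + 1) s r :=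
  keptLength_le.trans (h.shape_succ_le_keptLength hlam)

lemma Valid.exists_of_mem_departing (hy : y ∈ departing (k + 1) s (r + 1)) :
    ∃ c < keptLength (k + 1) s r, nmax (s.cell r c) < y ∧ y ∈ s.cell (r + 1) c := by
  have above {c : ℕ} (hc : c < s.shape (r + 1)) (hyc : y ∈ s.cell (r + 1) c) :
      ∃ c < keptLength (k + 1) s r, nmax (s.cell r c) < y ∧ y ∈ s.cell (r + 1) c := by
    have hc' := hc.trans_le (h.shape_succ_le_keptLength hlam)
    refine ⟨c, hc', h.cols r c hc _ (nmax_mem (h.nonempty r c ?_)) y hyc, hyc⟩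
    exact hc'.trans_le keptLength_le
  rcases mem_departing.mp hy with ⟨c, hc, hyc, -⟩ | ⟨hk, hyc⟩
  · exact above (hc.trans_le keptLength_le) hyc
  · exact above (by have := hk.1; omega) hyc

end Ascend

section AscendValid

variable {lam : ℕ → ℕ} {k : ℕ} {s : State} (h : Valid lam (k + 1) s)
include h

lemma Valid.pos_of_mem_ascend_cell {i j a : ℕ} (ha : a ∈ (ascend (k + 1) s).cell i j) :
    1 ≤ a := by
  by_cases hj : j < keptLength (k + 1) s i
  · rcases (mem_ascend_cell_of_lt hj).mp ha with rfl | ⟨hdep, -⟩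
    · exact h.pos i j _ (nmax_mem (h.nonempty i j (hj.trans_le keptLength_le)))
    · rcases mem_departing.mp hdep with ⟨c, -, hac, -⟩ | ⟨-, hac⟩ <;> exact h.pos _ _ a hac
  · simp [ascend_cell_of_le (not_lt.mp hj)] at ha

lemma Valid.ascend_rows (i j : ℕ) (hj : j + 1 < keptLength (k + 1) s i)
    (a : ℕ) (ha : a ∈ (ascend (k + 1) s).cell i j) (b : ℕ)
    (hb : b ∈ (ascend (k + 1) s).cell i (j + 1)) : a ≤ b := by
  refine le_trans ?_ (nmax_le_of_mem_ascend_cell hj hb)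
  rcases (mem_ascend_cell_of_lt (k := k + 1) (by omega)).mp ha with rfl | ⟨-, -, hright⟩
  · exact h.nmax_mono (Nat.le_succ j) (hj.trans_le keptLength_le)
  · exact hright (j + 1) hj (Nat.lt_succ_self j)

lemma Valid.label_le_of_lt_keptLength {i j : ℕ} (hi : lam i ≤ j)
    (hj : j < keptLength (k + 1) s i) : s.label i j ≤ k := by
  have hjs : j < s.shape i := hj.trans_le keptLength_le
  by_cases hk : EndsWith (k + 1) s i
  · rw [keptLength_of_endsWith hk] at hj
    have := h.label_row i j hi (by omega)
    have := h.label_mono (i := i) (j := j + 1) (j' := s.shape i - 1) (by omega) (by omega)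
      (by omega)
    have := hk.2
    omega
  · have hlast : s.label i (s.shape i - 1) ≠ k + 1 := fun he => hk ⟨by omega, he⟩
    have := (h.label_mem i (s.shape i - 1) (by omega) (by omega)).2.2
    have := h.label_mono hi (j' := s.shape i - 1) (by omega) (by omega)
    omega

lemma Valid.ascend_label_mem (i j : ℕ) (hi : lam i ≤ j)
    (hj : j < keptLength (k + 1) s i) :
    1 ≤ (ascend (k + 1) s).label i j ∧ (ascend (k + 1) s).label i j ≤ i ∧
      (ascend (k + 1) s).label i j ≤ k := by
  obtain ⟨h₁, h₂, -⟩ := h.label_mem i j hi (hj.trans_le keptLength_le)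
  rw [ascend_label_of_lt hj]
  exact ⟨h₁, h₂, h.label_le_of_lt_keptLength hi hj⟩

lemma Valid.ascend_le_row_of_lt (i j a b : ℕ) (ha : a ∈ (ascend (k + 1) s).cell i j)
    (hb : b ∈ (ascend (k + 1) s).cell i j) (hab : a < b) : k ≤ i := by
  by_cases hj : j < keptLength (k + 1) s i
  · rcases (mem_ascend_cell_of_lt hj).mp ha with rfl | ⟨ha, -⟩
    · rcases (mem_ascend_cell_of_lt hj).mp hb with rfl | ⟨hb, -⟩
      · exact absurd hab (lt_irrefl _)
      · exact h.le_row_of_mem_departing hb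
    · exact h.le_row_of_mem_departing ha
  · simp [ascend_cell_of_le (not_lt.mp hj)] at ha

variable (hlam : IsPartitionFn lam)
include hlam

lemma Valid.lt_nmax_of_mem_ascend_cell {i j a : ℕ} (hj : j < keptLength (k + 1) s (i + 1))
    (ha : a ∈ (ascend (k + 1) s).cell i j) : a < nmax (s.cell (i + 1) j) := by
  have hjs : j < s.shape (i + 1) := hj.trans_le keptLength_le
  have hji : j < keptLength (k + 1) s i := hjs.trans_le (h.shape_succ_le_keptLength hlam)
  rcases (mem_ascend_cell_of_lt hji).mp ha with rfl | ⟨hdep, -, hright⟩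
  · exact h.cols i j hjs _ (nmax_mem (h.nonempty i j (hji.trans_le keptLength_le))) _
      (nmax_mem (h.nonempty (i + 1) j hjs))
  have col_le {c : ℕ} (hc : c < s.shape (i + 1)) (hac : a ∈ s.cell (i + 1) c) : c ≤ j := by
    by_contra hcj
    have hci := hc.trans_le (h.shape_succ_le_keptLength hlam)
    have := hright c hci (by omega)
    have := h.cols i c hc _ (nmax_mem (h.nonempty i c (hci.trans_le keptLength_le))) a hac
    omega
  rcases mem_departing.mp hdep with ⟨c, hc, hac, hlt⟩ | ⟨hk, hac⟩
  · exact hlt.trans_le (h.nmax_mono (col_le (hc.trans_le keptLength_le) hac) hjs)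
  · have := col_le (by have := hk.1; omega) hac
    rw [keptLength_of_endsWith hk] at hj
    omega

lemma Valid.ascend_cols (i j : ℕ) (hj : j < keptLength (k + 1) s (i + 1))
    (a : ℕ) (ha : a ∈ (ascend (k + 1) s).cell i j) (b : ℕ)
    (hb : b ∈ (ascend (k + 1) s).cell (i + 1) j) : a < b :=
  (h.lt_nmax_of_mem_ascend_cell hlam hj ha).trans_le (nmax_le_of_mem_ascend_cell hj hb)

theorem valid_ascend : Valid lam k (ascend (k + 1) s) where
  antitone := antitone_nat_of_succ_le fun _ => h.keptLength_succ_le hlam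
  eventually_zero := by
    obtain ⟨N, hN⟩ := h.eventually_zero
    exact ⟨N, fun m hm => Nat.eq_zero_of_le_zero ((keptLength_le).trans (hN m hm).le)⟩
  le_shape i := by
    by_cases hk : EndsWith (k + 1) s i
    · have := h.lam_le_of_endsWith hk
      simp only [ascend, keptLength_of_endsWith hk]
      omega
    · simpa only [ascend, keptLength_of_not_endsWith hk] using h.le_shape i
  nonempty i j hj := ⟨_, (mem_ascend_cell_of_lt hj).mpr (Or.inl rfl)⟩
  pos i j := fun _ he => h.pos_of_mem_ascend_cell he
  cell_eq_empty i j hj := ascend_cell_of_le hj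
  rows := h.ascend_rows
  cols := h.ascend_cols hlam
  label_mem := h.ascend_label_mem
  label_eq_zero i j hj := by
    by_cases hjk : j < keptLength (k + 1) s i
    · rw [ascend_label_of_lt hjk]
      exact h.label_eq_zero i j (hj.imp_right fun hj' => absurd hjk (not_lt.mpr hj'))
    · exact ascend_label_of_le (not_lt.mp hjk)
  label_row i j hi hj := by
    rw [ascend_label_of_lt (k := k + 1) (by simp only [ascend] at hj; omega),
      ascend_label_of_lt hj]
    exact h.label_row i j hi (hj.trans_le keptLength_le)
  label_col i j hi hi' hj := by
    rw [ascend_label_of_lt (hj.trans_le (h.keptLength_succ_le hlam)), ascend_label_of_lt hj]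
    exact h.label_col i j hi hi' (hj.trans_le keptLength_le)
  le_row_of_lt := h.ascend_le_row_of_lt

end AscendValid

section DescendAscend

variable {lam : ℕ → ℕ} {k : ℕ} {s : State} (h : Valid lam (k + 1) s)
  (hlam : IsPartitionFn lam)
include h hlam

lemma Valid.excess_ascend (r : ℕ) :
    excess (ascend (k + 1) s) r = departing (k + 1) s (r + 1) := by
  ext y
  constructor
  · intro hy
    obtain ⟨c, hc, hyc, hlt⟩ := mem_excess.mp hy
    rw [nmin_ascend_cell hc] at hlt
    rcases (mem_ascend_cell_of_lt hc).mp hyc with rfl | ⟨hdep, -⟩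
    · exact absurd hlt (lt_irrefl _)
    · exact hdep
  · intro hy
    obtain ⟨c₀, hc₀, hlt₀, -⟩ := h.exists_of_mem_departing hlam hy
    set P : ℕ → Prop := fun c => nmax (s.cell r c) < y
    set c := Nat.findGreatest P (keptLength (k + 1) s r - 1)
    have hPc : P c := Nat.findGreatest_spec (m := c₀) (by omega) hlt₀
    have hc : c < keptLength (k + 1) s r := by
      have := Nat.findGreatest_le (P := P) (keptLength (k + 1) s r - 1)
      omega
    refine mem_excess.mpr ⟨c, hc, (mem_ascend_cell_of_lt hc).mpr (Or.inr ⟨hy, hPc, ?_⟩), ?_⟩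
    · exact fun c' hc' hcc' => not_lt.mp (Nat.findGreatest_is_greatest (P := P) hcc' (by omega))
    · rwa [nmin_ascend_cell hc]

lemma Valid.incoming_ascend {r j : ℕ} (hj : j < keptLength (k + 1) s r) :
    incoming (ascend (k + 1) s) r j = (s.cell r j).erase (nmax (s.cell r j)) := by
  have hjs : j < s.shape r := hj.trans_le keptLength_le
  cases r with
  | zero =>
    obtain ⟨a, ha⟩ := h.exists_cell_eq_singleton (Nat.succ_pos k) hjs
    simp [ha, nmax_singleton]
  | succ r =>
  ext y
  rw [mem_incoming_succ, h.excess_ascend hlam, Finset.mem_erase]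
  constructor
  · rintro ⟨hdep, hbelow, hleft⟩
    have hy : y < nmax (s.cell (r + 1) j) :=
      hbelow _ ((mem_ascend_cell_of_lt hj).mpr (Or.inl rfl))
    rcases mem_departing.mp hdep with ⟨c, hc, hyc, hlt⟩ | ⟨hk, hyc⟩
    · obtain rfl : c = j := by
        by_contra hne
        rcases Nat.lt_or_gt_of_ne hne with hcj | hcj
        · obtain ⟨a, ha, hay⟩ := hleft c hcj
          have := nmax_le_of_mem_ascend_cell hc ha
          omega
        · exact (h.nmax_le_of_lt hcj (hc.trans_le keptLength_le) hyc).not_gt hy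
      exact ⟨hlt.ne, hyc⟩
    · rw [keptLength_of_endsWith hk] at hj
      exact absurd hy (h.nmax_le_of_lt hj (by omega) hyc).not_gt
  · rintro ⟨hne, hyc⟩
    have hy := lt_nmax_of_mem_of_ne hyc hne
    refine ⟨mem_departing.mpr (Or.inl ⟨j, hj, hyc, hy⟩), fun a ha => ?_, fun j' hj' => ?_⟩
    · exact hy.trans_le (nmax_le_of_mem_ascend_cell hj ha)
    · exact ⟨_, (mem_ascend_cell_of_lt (hj'.trans hj)).mpr (Or.inl rfl),
        h.nmax_le_of_lt hj' hjs hyc⟩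

lemma Valid.newBox_ascend {r : ℕ} : newBox (ascend (k + 1) s) r =
    if EndsWith (k + 1) s r then s.cell r (s.shape r - 1) else ∅ := by
  cases r with
  | zero => simp [h.not_endsWith_zero]
  | succ r =>
  ext y
  rw [mem_newBox_succ, h.excess_ascend hlam]
  constructor
  · rintro ⟨hdep, hall⟩
    rcases mem_departing.mp hdep with ⟨c, hc, -, hlt⟩ | ⟨hk, hyc⟩
    · obtain ⟨a, ha, hay⟩ := hall c hc
      have := nmax_le_of_mem_ascend_cell hc ha
      omega
    · rwa [if_pos hk]
  · intro hy
    split_ifs at hy with hk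
    · refine ⟨mem_departing.mpr (Or.inr ⟨hk, hy⟩), fun j hj => ?_⟩
      change j < keptLength (k + 1) s (r + 1) at hj
      have hj' : j < s.shape (r + 1) - 1 := by rwa [keptLength_of_endsWith hk] at hj
      exact ⟨_, (mem_ascend_cell_of_lt hj).mpr (Or.inl rfl),
        h.nmax_le_of_lt hj' (by omega) hy⟩
    · simp at hy

lemma Valid.newBox_ascend_nonempty_iff {r : ℕ} :
    (newBox (ascend (k + 1) s) r).Nonempty ↔ EndsWith (k + 1) s r := by
  rw [h.newBox_ascend hlam]
  split_ifs with hk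
  · exact iff_of_true (h.nonempty r _ (by have := hk.1; omega)) hk
  · exact iff_of_false Finset.not_nonempty_empty hk

lemma Valid.descend_ascend_shape (r : ℕ) :
    (descend (k + 1) (ascend (k + 1) s)).shape r = s.shape r := by
  by_cases hk : EndsWith (k + 1) s r
  · rw [descend_shape_of_nonempty ((h.newBox_ascend_nonempty_iff hlam).mpr hk)]
    change keptLength (k + 1) s r + 1 = s.shape r
    rw [keptLength_of_endsWith hk]
    exact Nat.sub_add_cancel hk.1
  · rw [descend_shape_of_not_nonempty (mt (h.newBox_ascend_nonempty_iff hlam).mp hk)]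
    exact keptLength_of_not_endsWith hk

theorem Valid.descend_ascend : descend (k + 1) (ascend (k + 1) s) = s := by
  have last {r : ℕ} (hk : EndsWith (k + 1) s r) : (ascend (k + 1) s).shape r = s.shape r - 1 :=
    keptLength_of_endsWith hk
  refine State.ext (funext (h.descend_ascend_shape hlam)) (funext₂ fun r j => ?_)
    (funext₂ fun r j => ?_)
  · by_cases hj : j < keptLength (k + 1) s r
    · rw [descend_cell_of_lt hj, nmin_ascend_cell hj, h.incoming_ascend hlam hj,
        Finset.insert_erase (nmax_mem (h.nonempty r j (hj.trans_le keptLength_le)))]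
    by_cases hlast : EndsWith (k + 1) s r ∧ j = s.shape r - 1
    · obtain ⟨hk, rfl⟩ := hlast
      rw [← last hk, descend_cell_shape ((h.newBox_ascend_nonempty_iff hlam).mpr hk),
        h.newBox_ascend hlam, if_pos hk, last hk]
    · have hbeyond := shape_le_of_not_lt_keptLength hj hlast
      rw [descend_cell_of_le ((h.descend_ascend_shape hlam r).trans_le hbeyond),
        h.cell_eq_empty r j hbeyond]
  · by_cases hj : j < keptLength (k + 1) s r
    · rw [descend_label_of_lt hj, ascend_label_of_lt hj]
    by_cases hlast : EndsWith (k + 1) s r ∧ j = s.shape r - 1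
    · obtain ⟨hk, rfl⟩ := hlast
      rw [← last hk, descend_label_shape ((h.newBox_ascend_nonempty_iff hlam).mpr hk), last hk,
        hk.2]
    · have hnew : ¬ (j = (ascend (k + 1) s).shape r ∧ (newBox (ascend (k + 1) s) r).Nonempty) :=
        fun ⟨he, hne⟩ => by
          have hk := (h.newBox_ascend_nonempty_iff hlam).mp hne
          exact hlast ⟨hk, he.trans (last hk)⟩
      rw [descend_label_of_not hnew, ascend_label_of_le (not_lt.mp hj),
        h.label_eq_zero r j (Or.inr (shape_le_of_not_lt_keptLength hj hlast))]

end DescendAscend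

section AscendDescend

variable {lam : ℕ → ℕ} {k : ℕ} {s : State} (h : Valid lam k s)
include h

lemma Valid.nmax_descend_cell {r j k' : ℕ} (hj : j < s.shape r) :
    nmax ((descend k' s).cell r j) = nmin (s.cell r j) := by
  rw [descend_cell_of_lt hj]
  exact nmax_insert_of_lt fun x hx => h.lt_nmin_of_mem_incoming hj hx

lemma Valid.endsWith_descend_iff {r : ℕ} :
    EndsWith (k + 1) (descend (k + 1) s) r ↔ (newBox s r).Nonempty := by
  constructor
  · rintro ⟨hpos, hlab⟩
    by_contra hb
    rw [descend_shape_of_not_nonempty hb] at hpos hlab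
    rw [descend_label_of_lt (by omega)] at hlab
    by_cases hli : lam r ≤ s.shape r - 1
    · have := (h.label_mem r _ hli (by omega)).2.2
      omega
    · have := h.label_eq_zero r (s.shape r - 1) (Or.inl (by omega))
      omega
  · intro hb
    refine ⟨by rw [descend_shape_of_nonempty hb]; omega, ?_⟩
    rw [descend_shape_of_nonempty hb, Nat.add_sub_cancel, descend_label_shape hb]

lemma Valid.keptLength_descend (r : ℕ) :
    keptLength (k + 1) (descend (k + 1) s) r = s.shape r := by
  by_cases hb : (newBox s r).Nonempty
  · rw [keptLength_of_endsWith (h.endsWith_descend_iff.mpr hb), descend_shape_of_nonempty hb,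
      Nat.add_sub_cancel]
  · rw [keptLength_of_not_endsWith (mt h.endsWith_descend_iff.mp hb),
      descend_shape_of_not_nonempty hb]

lemma Valid.departing_descend (r : ℕ) :
    departing (k + 1) (descend (k + 1) s) (r + 1) = excess s r := by
  ext x
  rw [mem_departing, h.keptLength_descend]
  constructor
  · rintro (⟨c, hc, hxc, hlt⟩ | ⟨hk, hxc⟩)
    · rw [h.nmax_descend_cell hc] at hlt
      rw [descend_cell_of_lt hc] at hxc
      rcases Finset.mem_insert.mp hxc with rfl | hx
      · exact absurd hlt (lt_irrefl _)
      · exact (mem_incoming_succ.mp hx).1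
    · have hb := h.endsWith_descend_iff.mp hk
      rw [descend_shape_of_nonempty hb, Nat.add_sub_cancel, descend_cell_shape hb] at hxc
      exact (mem_newBox_succ.mp hxc).1
  · intro hx
    rcases slot_spec hx with ⟨hlt, hin⟩ | ⟨-, hnew⟩
    · refine Or.inl ⟨_, hlt, mem_descend_cell.mpr (Or.inl ⟨hlt, Or.inr hin⟩), ?_⟩
      rw [h.nmax_descend_cell hlt]
      exact h.lt_nmin_of_mem_incoming hlt hin
    · have hb : (newBox s (r + 1)).Nonempty := ⟨x, hnew⟩
      refine Or.inr ⟨h.endsWith_descend_iff.mpr hb, ?_⟩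
      rwa [descend_shape_of_nonempty hb, Nat.add_sub_cancel, descend_cell_shape hb]

lemma Valid.ascend_descend_cell {r j : ℕ} (hj : j < s.shape r) :
    (ascend (k + 1) (descend (k + 1) s)).cell r j = s.cell r j := by
  ext x
  rw [mem_ascend_cell_of_lt (by rwa [h.keptLength_descend]), h.departing_descend,
    h.keptLength_descend, h.nmax_descend_cell hj]
  constructor
  · rintro (rfl | ⟨hx, hgt, hright⟩)
    · exact nmin_mem (h.nonempty r j hj)
    obtain ⟨c, hc, hxc, hmc⟩ := mem_excess.mp hx
    obtain rfl : c = j := by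
      by_contra hne
      rcases Nat.lt_or_gt_of_ne hne with hcj | hcj
      · exact (h.le_nmin_of_lt hcj hj hxc).not_gt hgt
      · have := hright c hc hcj
        rw [h.nmax_descend_cell hc] at this
        omega
    exact hxc
  · intro hx
    by_cases hxm : x = nmin (s.cell r j)
    · exact Or.inl hxm
    have hlt := nmin_lt_of_mem_of_ne hx hxm
    refine Or.inr ⟨mem_excess.mpr ⟨j, hj, hx, hlt⟩, hlt, fun c hc hjc => ?_⟩
    rw [h.nmax_descend_cell hc]
    exact h.le_nmin_of_lt hjc hc hx

theorem Valid.ascend_descend : ascend (k + 1) (descend (k + 1) s) = s := by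
  refine State.ext (funext h.keptLength_descend) (funext₂ fun r j => ?_) (funext₂ fun r j => ?_)
  · by_cases hj : j < s.shape r
    · exact h.ascend_descend_cell hj
    · rw [ascend_cell_of_le (by rw [h.keptLength_descend]; omega),
        h.cell_eq_empty r j (by omega)]
  · by_cases hj : j < s.shape r
    · rw [ascend_label_of_lt (by rwa [h.keptLength_descend]), descend_label_of_lt hj]
    · rw [ascend_label_of_le (by rw [h.keptLength_descend]; omega),
        h.label_eq_zero r j (Or.inr (by omega))]

end AscendDescend

section Rounds

noncomputable def descendIter : ℕ → State → State
  | 0, s => s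
  | n + 1, s => descend (n + 1) (descendIter n s)

noncomputable def ascendIter : ℕ → State → State
  | 0, s => s
  | n + 1, s => ascendIter n (ascend (n + 1) s)

variable {lam : ℕ → ℕ} {s : State}

lemma valid_descendIter (h : Valid lam 0 s) (n : ℕ) : Valid lam n (descendIter n s) := by
  induction n with
  | zero => exact h
  | succ n ih => exact valid_descend ih

lemma Valid.content_descendIter (h : Valid lam 0 s) (n v : ℕ) :
    (descendIter n s).content v = s.content v := by
  induction n with
  | zero => rfl
  | succ n ih => exact ((valid_descendIter h n).descend_content v).trans ih

lemma valid_ascendIter {n : ℕ} (h : Valid lam n s) (hlam : IsPartitionFn lam) :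
    Valid lam 0 (ascendIter n s) := by
  induction n generalizing s with
  | zero => exact h
  | succ n ih => exact ih (valid_ascend h hlam)

lemma Valid.content_ascend {k : ℕ} (h : Valid lam (k + 1) s) (hlam : IsPartitionFn lam)
    (v : ℕ) : (ascend (k + 1) s).content v = s.content v := by
  conv_rhs => rw [← h.descend_ascend hlam]
  exact ((valid_ascend h hlam).descend_content v).symm

lemma Valid.content_ascendIter {n : ℕ} (h : Valid lam n s) (hlam : IsPartitionFn lam) (v : ℕ) :
    (ascendIter n s).content v = s.content v := by
  induction n generalizing s with
  | zero => rfl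
  | succ n ih => exact (ih (valid_ascend h hlam)).trans (h.content_ascend hlam v)

lemma Valid.ascendIter_descendIter (h : Valid lam 0 s) (n : ℕ) :
    ascendIter n (descendIter n s) = s := by
  induction n with
  | zero => rfl
  | succ n ih => exact (congrArg (ascendIter n) (valid_descendIter h n).ascend_descend).trans ih

lemma Valid.descendIter_ascendIter {n : ℕ} (h : Valid lam n s) (hlam : IsPartitionFn lam) :
    descendIter n (ascendIter n s) = s := by
  induction n generalizing s with
  | zero => rfl
  | succ n ih =>
    exact (congrArg (descend (n + 1)) (ih (valid_ascend h hlam))).trans (h.descend_ascend hlam)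

end Rounds

def Stage (lam δ : ℕ → ℕ) (k : ℕ) : Type :=
  {s : State // Valid lam k s ∧ ∀ v, 1 ≤ v → s.content v = δ v}

noncomputable def stageEquiv {lam : ℕ → ℕ} (hlam : IsPartitionFn lam) (δ : ℕ → ℕ)
    (n : ℕ) : Stage lam δ 0 ≃ Stage lam δ n where
  toFun s := ⟨descendIter n s.1, valid_descendIter s.2.1 n,
    fun v hv => (s.2.1.content_descendIter n v).trans (s.2.2 v hv)⟩
  invFun s := ⟨ascendIter n s.1, valid_ascendIter s.2.1 hlam,
    fun v hv => (s.2.1.content_ascendIter hlam v).trans (s.2.2 v hv)⟩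
  left_inv s := Subtype.ext (s.2.1.ascendIter_descendIter n)
  right_inv s := Subtype.ext (s.2.1.descendIter_ascendIter hlam)

section Tableaux

variable {lam : ℕ → ℕ} {k N : ℕ} {δ : ℕ → ℕ} {s : State}

lemma Valid.isPartitionFn_shape (h : Valid lam k s) : IsPartitionFn s.shape :=
  ⟨fun _ _ hab => h.antitone hab, h.eventually_zero⟩

lemma Valid.lt_of_mem_cell (h : Valid lam k s) (hs : ∀ v, 1 ≤ v → s.content v = δ v)
    (hN : ∀ v, N ≤ v → δ v = 0) {i j v : ℕ} (hj : j < s.shape i) (hv : v ∈ s.cell i j) :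
    v < N := by
  have hne : s.content v ≠ 0 :=
    Set.ncard_ne_zero_of_mem (a := (i, j)) ⟨hj, hv⟩
      (h.isPartitionFn_shape.finite_boxes.subset fun _ hp => hp.1)
  by_contra hge
  exact hne ((hs v (h.pos i j v hv)).trans (hN v (not_lt.mp hge)))

/-- Rows `≥ N` are empty, since the entries of row `i` are at least `i + 1`. -/
lemma Valid.cell_eq_singleton (h : Valid lam N s) (hs : ∀ v, 1 ≤ v → s.content v = δ v)
    (hN : ∀ v, N ≤ v → δ v = 0) {i j : ℕ} (hj : j < s.shape i) :
    s.cell i j = {nmin (s.cell i j)} := by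
  by_cases hi : i < N
  · obtain ⟨a, ha⟩ := h.exists_cell_eq_singleton hi hj
    rw [ha, nmin_singleton]
  · obtain ⟨a, ha⟩ := h.nonempty i j hj
    have := h.succ_le_of_mem i j a hj ha
    have := h.lt_of_mem_cell hs hN hj ha
    omega

lemma Valid.shape_eq (h : Valid lam 0 s) : s.shape = lam := by
  funext i
  by_contra hne
  have hlt : lam i < s.shape i := lt_of_le_of_ne (h.le_shape i) (Ne.symm hne)
  have := h.label_mem i (lam i) le_rfl hlt
  omega

def ofSVYT (F : SVYT lam) : State := ⟨lam, F.box, fun _ _ => 0⟩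

lemma valid_ofSVYT (hlam : IsPartitionFn lam) (F : SVYT lam) : Valid lam 0 (ofSVYT F) where
  antitone _ _ hab := hlam.1 _ _ hab
  eventually_zero := hlam.2
  le_shape _ := le_rfl
  nonempty := F.nonempty
  pos := F.pos
  cell_eq_empty := F.outside
  rows := F.rows
  cols := F.cols
  label_mem _ _ h₁ h₂ := absurd h₂ (not_lt.mpr h₁)
  label_eq_zero _ _ _ := rfl
  label_row _ _ h₁ h₂ := absurd h₂ (by simp only [ofSVYT]; omega)
  label_col i j h₁ h₂ h₃ := absurd h₃ (by
    have := hlam.1 i (i + 1) (Nat.le_succ i)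
    simp only [ofSVYT]
    omega)
  le_row_of_lt _ _ _ _ _ _ _ := Nat.zero_le _

def Valid.toSVYT (h : Valid lam 0 s) : SVYT lam where
  box := s.cell
  nonempty i j hj := h.nonempty i j (h.shape_eq ▸ hj)
  pos := h.pos
  outside i j hj := h.cell_eq_empty i j (h.shape_eq ▸ hj)
  rows i j hj := h.rows i j (h.shape_eq ▸ hj)
  cols i j hj := h.cols i j (h.shape_eq ▸ hj)

lemma Valid.content_toSVYT (h : Valid lam 0 s) (v : ℕ) : h.toSVYT.content v = s.content v := by
  simp only [SVYT.content, State.content, support, h.shape_eq, Valid.toSVYT]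

def svytEquivStage (hlam : IsPartitionFn lam) (δ : ℕ → ℕ) :
    {F : SVYT lam // ∀ v, 1 ≤ v → F.content v = δ v} ≃ Stage lam δ 0 where
  toFun F := ⟨ofSVYT F.1, valid_ofSVYT hlam F.1, F.2⟩
  invFun s := ⟨s.2.1.toSVYT, fun v hv => (s.2.1.content_toSVYT v).trans (s.2.2 v hv)⟩
  left_inv _ := rfl
  right_inv s := by
    refine Subtype.ext (State.ext s.2.1.shape_eq.symm rfl (funext₂ fun i j => ?_))
    have := s.2.1.shape_eq
    exact (s.2.1.label_eq_zero i j (by grind)).symm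

lemma finite_svyt (hlam : IsPartitionFn lam) (hN : ∀ v, N ≤ v → δ v = 0) :
    Finite {F : SVYT lam // ∀ v, 1 ≤ v → F.content v = δ v} := by
  have := hlam.finite_boxes.to_subtype
  let code (F : {F : SVYT lam // ∀ v, 1 ≤ v → F.content v = δ v})
      (p : {p : ℕ × ℕ | p.2 < lam p.1}) : (Finset.range N).powerset :=
    ⟨F.1.box p.1.1 p.1.2, Finset.mem_powerset.mpr fun v hv => Finset.mem_range.mpr
      ((valid_ofSVYT hlam F.1).lt_of_mem_cell F.2 hN p.2 hv)⟩
  refine Finite.of_injective code fun F G hFG => Subtype.ext (SVYT.box_injective ?_)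
  funext i j
  by_cases hj : j < lam i
  · exact congrArg Subtype.val (congrFun hFG ⟨(i, j), hj⟩)
  · rw [F.1.outside i j (not_lt.mp hj), G.1.outside i j (not_lt.mp hj)]

end Tableaux

section Output

variable {lam : ℕ → ℕ} {k N : ℕ} {δ : ℕ → ℕ} {s : State}

def Valid.toFilling (h : Valid lam k s) : LenartFilling lam s.shape where
  entry := s.label
  outside := h.label_eq_zero
  rowBound i j h₁ h₂ := ⟨(h.label_mem i j h₁ h₂).1, (h.label_mem i j h₁ h₂).2.1⟩
  rows := h.label_row
  cols i j h₁ h₂ _ h₃ := h.label_col i j h₁ h₂ h₃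

def Valid.toSSYT (h : Valid lam k s) : SSYT s.shape where
  entry i j := if j < s.shape i then nmin (s.cell i j) else 0
  pos i j hj := by
    rw [if_pos hj]
    exact h.pos i j _ (nmin_mem (h.nonempty i j hj))
  outside i j hj := if_neg (not_lt.mpr hj)
  rows i j hj := by
    rw [if_pos (by omega), if_pos hj]
    exact h.nmin_mono (Nat.le_succ j) hj
  cols i j hj := by
    have hji := hj.trans_le (h.shape_succ_le i)
    rw [if_pos hji, if_pos hj]
    exact h.cols i j hj _ (nmin_mem (h.nonempty i j hji)) _ (nmin_mem (h.nonempty (i + 1) j hj))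

lemma Valid.content_toSSYT (h : Valid lam N s) (hs : ∀ v, 1 ≤ v → s.content v = δ v)
    (hN : ∀ v, N ≤ v → δ v = 0) (v : ℕ) : h.toSSYT.content v = s.content v := by
  refine congrArg Set.ncard (Set.ext fun p => and_congr_right fun hp => ?_)
  simp only [Valid.toSSYT, if_pos hp]
  conv_rhs => rw [h.cell_eq_singleton hs hN hp, Finset.mem_singleton]
  exact eq_comm

def ofTableau {mu : ℕ → ℕ} (g : LenartFilling lam mu) (T : SSYT mu) : State :=
  ⟨mu, fun i j => if j < mu i then {T.entry i j} else ∅, g.entry⟩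

variable {mu : ℕ → ℕ} {g : LenartFilling lam mu} {T : SSYT mu}

@[simp] lemma ofTableau_label : (ofTableau g T).label = g.entry := rfl

lemma mem_ofTableau_cell {i j a : ℕ} :
    a ∈ (ofTableau g T).cell i j ↔ j < mu i ∧ a = T.entry i j := by
  simp only [ofTableau]
  split_ifs with hj <;> simp [hj]

lemma content_ofTableau (v : ℕ) : (ofTableau g T).content v = T.content v := by
  refine congrArg Set.ncard (Set.ext fun p => and_congr_right fun hp => ?_)
  rw [mem_ofTableau_cell, eq_comm]
  exact and_iff_right hp

lemma valid_ofTableau (hmu : IsPartitionFn mu) (hle : ∀ i, lam i ≤ mu i)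
    (hT : ∀ i j, j < mu i → T.entry i j < N) : Valid lam N (ofTableau g T) where
  antitone _ _ hab := hmu.1 _ _ hab
  eventually_zero := hmu.2
  le_shape := hle
  nonempty i j hj := ⟨_, mem_ofTableau_cell.mpr ⟨hj, rfl⟩⟩
  pos i j e he := by
    obtain ⟨hj, rfl⟩ := mem_ofTableau_cell.mp he
    exact T.pos i j hj
  cell_eq_empty i j hj := by
    ext a
    simp only [mem_ofTableau_cell, Finset.notMem_empty, iff_false, not_and]
    exact fun hj' => absurd hj (not_le.mpr hj')
  rows i j hj a ha b hb := by
    obtain ⟨-, rfl⟩ := mem_ofTableau_cell.mp ha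
    obtain ⟨-, rfl⟩ := mem_ofTableau_cell.mp hb
    exact T.rows i j hj
  cols i j hj a ha b hb := by
    obtain ⟨-, rfl⟩ := mem_ofTableau_cell.mp ha
    obtain ⟨-, rfl⟩ := mem_ofTableau_cell.mp hb
    exact T.cols i j hj
  label_mem i j h₁ h₂ := by
    have := T.succ_le_entry hmu i j h₂
    have := hT i j h₂
    have := g.rowBound i j h₁ h₂
    exact ⟨this.1, this.2, by simp only [ofTableau_label]; omega⟩
  label_eq_zero := g.outside
  label_row := g.rows
  label_col i j h₁ h₂ h₃ :=
    g.cols i j h₁ h₂ (h₃.trans_le (hmu.1 i (i + 1) (Nat.le_succ i))) h₃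
  le_row_of_lt i j a b ha hb hab := by
    obtain ⟨-, rfl⟩ := mem_ofTableau_cell.mp ha
    obtain ⟨-, rfl⟩ := mem_ofTableau_cell.mp hb
    exact absurd hab (lt_irrefl _)

noncomputable def stageEquivSigma (hN : ∀ v, N ≤ v → δ v = 0) :
    Stage lam δ N ≃ Σ mu : {m : ℕ → ℕ // IsPartitionFn m ∧ ∀ i, lam i ≤ m i},
      LenartFilling lam mu.1 × {T : SSYT mu.1 // ∀ v, 1 ≤ v → T.content v = δ v} where
  toFun s := ⟨⟨s.1.shape, s.2.1.isPartitionFn_shape, s.2.1.le_shape⟩, s.2.1.toFilling,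
    s.2.1.toSSYT, fun v hv => (s.2.1.content_toSSYT s.2.2 hN v).trans (s.2.2 v hv)⟩
  invFun x := ⟨ofTableau x.2.1 x.2.2.1,
    valid_ofTableau x.1.2.1 x.1.2.2 fun _ _ hj => x.2.2.1.entry_lt x.1.2.1 x.2.2.2 hN hj,
    fun v hv => (content_ofTableau v).trans (x.2.2.2 v hv)⟩
  left_inv s := by
    refine Subtype.ext (State.ext rfl (funext₂ fun i j => ?_) rfl)
    change (if j < s.1.shape i then {if j < s.1.shape i then _ else 0} else ∅) = _
    split_ifs with hj
    · exact (s.2.1.cell_eq_singleton s.2.2 hN hj).symm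
    · exact (s.2.1.cell_eq_empty i j (not_lt.mp hj)).symm
  right_inv x := by
    refine Sigma.ext rfl (heq_of_eq (Prod.ext rfl (Subtype.ext (SSYT.entry_injective ?_))))
    funext i j
    change (if j < x.1.1 i then nmin (if j < x.1.1 i then {_} else ∅) else 0) = _
    split_ifs with hj
    · exact nmin_singleton _
    · exact (x.2.2.1.outside i j (not_lt.mp hj)).symm

end Output

end Lenart

/-- The number of set-valued semistandard Young tableaux of shape `λ` and
content `δ` equals `Σ_{μ ⊇ λ} g_{λ,μ} · N_{μ,δ}`, where `N_{μ,δ}` is the number of ordinary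
semistandard Young tableaux of shape `μ` and content `δ`, and `g_{λ,μ}` counts the
row-and-column-strict fillings of `μ/λ` whose row-`i` entries lie in `{1, …, i−1}`. -/
theorem stmt16 (lam : ℕ → ℕ) (hlam : IsPartitionFn lam) (δ : ℕ → ℕ)
    (hδ : ∃ N : ℕ, ∀ v : ℕ, N ≤ v → δ v = 0) :
    Nat.card {F : SVYT lam // ∀ v : ℕ, 1 ≤ v → F.content v = δ v} =
      ∑ᶠ mu : {m : ℕ → ℕ // IsPartitionFn m ∧ ∀ i, lam i ≤ m i},
        Nat.card (LenartFilling lam mu.1) *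
          Nat.card {T : SSYT mu.1 // ∀ v : ℕ, 1 ≤ v → T.content v = δ v} := by
  obtain ⟨N, hN⟩ := hδ
  let e := (Lenart.svytEquivStage hlam δ).trans
    ((Lenart.stageEquiv hlam δ N).trans (Lenart.stageEquivSigma hN))
  have := Lenart.finite_svyt hlam hN
  have := Finite.of_equiv _ e
  rw [Nat.card_congr e, Nat.card_sigma_eq_finsum]
  exact finsum_congr fun _ => Nat.card_prod _ _
end

section
/- Let R be a commutative ring, β ∈ R, n ≥ 2, and 1 ≤ i ≤ n−1. For f ∈ R[x_1,…,x_n], let s_i f denote f with the variables x_i and x_{i+1} exchanged; then f − s_i f is divisible by x_i − x_{i+1} with a unique quotient, denoted ∂_i f, and one defines τ_i f = ∂_i(x_i(1+β x_{i+1}) f). Then for every f ∈ R[x_1,…,x_n]: τ_i(τ_i f) = τ_i f. Consequently, setting τ̂_i f = τ_i f − f, one has τ̂_i(τ̂_i f) = −τ̂_i f for every f. -/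
open MvPolynomial

section Aux

variable {R : Type*} [CommRing R] {n : ℕ}

private lemma auxRegX (i : Fin n) (q : MvPolynomial (Fin n) R)
    (h : X i * q = 0) : q = 0 := by
  ext m
  have h2 := congrArg (coeff (Finsupp.single i 1 + m)) h
  rw [coeff_X_mul] at h2
  simpa using h2

private lemma auxCancel (i j : Fin n) (hne : i ≠ j) (p q : MvPolynomial (Fin n) R)
    (h : (X i - X j) * p = (X i - X j) * q) : p = q := by
  set φ : MvPolynomial (Fin n) R →ₐ[R] MvPolynomial (Fin n) R :=
    aeval (fun k => if k = i then X i + X j else X k) with hφ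
  set ψ : MvPolynomial (Fin n) R →ₐ[R] MvPolynomial (Fin n) R :=
    aeval (fun k => if k = i then X i - X j else X k) with hψ
  have hinv : ∀ p : MvPolynomial (Fin n) R, ψ (φ p) = p := by
    intro p
    have : ψ.comp φ = AlgHom.id R (MvPolynomial (Fin n) R) := by
      apply algHom_ext
      intro k
      by_cases hk : k = i
      · subst hk
        simp [hφ, hψ, if_neg (Ne.symm hne)]
      · simp [hφ, hψ, hk]
    calc ψ (φ p) = (ψ.comp φ) p := rfl
      _ = p := by rw [this]; rfl
  have hφd : φ (X i - X j) = X i := by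
    simp [hφ, if_neg (Ne.symm hne)]
  have h3 : X i * (φ p - φ q) = 0 := by
    have := congrArg φ h
    rw [map_mul, map_mul, hφd] at this
    rw [mul_sub, this, sub_self]
  have h4 : φ p = φ q := sub_eq_zero.mp (auxRegX i _ h3)
  calc p = ψ (φ p) := (hinv p).symm
    _ = ψ (φ q) := by rw [h4]
    _ = q := hinv q

private lemma auxSS (i j : Fin n) (g : MvPolynomial (Fin n) R) :
    rename (Equiv.swap i j) (rename (Equiv.swap i j) g) = g := by
  rw [rename_rename]
  have : (⇑(Equiv.swap i j)) ∘ (⇑(Equiv.swap i j)) = id := by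
    funext x; simp
  rw [this, rename_id]; rfl

private lemma auxDvd (i j : Fin n) (g : MvPolynomial (Fin n) R) :
    (X i - X j) ∣ g - rename (Equiv.swap i j) g := by
  induction g using MvPolynomial.induction_on with
  | C a => simp
  | add p q hp hq =>
      rw [map_add]
      have h : p + q - (rename (Equiv.swap i j) p + rename (Equiv.swap i j) q)
          = (p - rename (Equiv.swap i j) p) + (q - rename (Equiv.swap i j) q) := by ring
      rw [h]; exact dvd_add hp hq
  | mul_X p k hp =>
      rw [map_mul, rename_X]
      have key : (X i - X j) ∣ (X k - X ((Equiv.swap i j) k) : MvPolynomial (Fin n) R) := by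
        rcases eq_or_ne k i with rfl | hki
        · rw [Equiv.swap_apply_left]
        rcases eq_or_ne k j with rfl | hkj
        · rw [Equiv.swap_apply_right]
          exact ⟨-1, by ring⟩
        · rw [Equiv.swap_apply_of_ne_of_ne hki hkj]; simp
      have h : p * X k - rename (Equiv.swap i j) p * X ((Equiv.swap i j) k)
          = (p - rename (Equiv.swap i j) p) * X k
            + rename (Equiv.swap i j) p * (X k - X ((Equiv.swap i j) k)) := by ring
      rw [h]
      exact dvd_add (hp.mul_right _) (key.mul_left _)

end Aux

/-- Let `i, j = i+1` be adjacent variable indices, `s` the exchange of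
`x_i` and `x_j`, and for `f` let `τ_i f` be the unique `t` with
`(x_i - x_j) * t = A f - s (A f)` where `A f = x_i (1 + β x_j) f` (so `τ_i f = ∂_i (A f)`).
Then such a `t` exists, `τ_i (τ_i f) = τ_i f`, and consequently
`τ̂_i (τ̂_i f) = -(τ̂_i f)` where `τ̂_i f = τ_i f - f`. -/
theorem stmt17 (R : Type*) [CommRing R] (β : R) (n : ℕ) (hn : 2 ≤ n)
    (i j : Fin n) (hij : (i : ℕ) + 1 = (j : ℕ)) (f : MvPolynomial (Fin n) R) :
    (∃ t : MvPolynomial (Fin n) R,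
      (X i - X j) * t =
        (X i * (1 + C β * X j) * f) -
          rename (Equiv.swap i j) (X i * (1 + C β * X j) * f)) ∧
    (∀ t u : MvPolynomial (Fin n) R,
      (X i - X j) * t =
        (X i * (1 + C β * X j) * f) -
          rename (Equiv.swap i j) (X i * (1 + C β * X j) * f) →
      (X i - X j) * u =
        (X i * (1 + C β * X j) * t) -
          rename (Equiv.swap i j) (X i * (1 + C β * X j) * t) →
      u = t) ∧
    (∀ t w : MvPolynomial (Fin n) R,
      (X i - X j) * t =
        (X i * (1 + C β * X j) * f) -
          rename (Equiv.swap i j) (X i * (1 + C β * X j) * f) →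
      (X i - X j) * w =
        (X i * (1 + C β * X j) * (t - f)) -
          rename (Equiv.swap i j) (X i * (1 + C β * X j) * (t - f)) →
      w - (t - f) = -(t - f)) := by
  have hne : i ≠ j := by rintro rfl; omega
  have key : ∀ t : MvPolynomial (Fin n) R,
      (X i - X j) * t =
        (X i * (1 + C β * X j) * f) -
          rename (Equiv.swap i j) (X i * (1 + C β * X j) * f) →
      rename (Equiv.swap i j) t = t := by
    intro t ht
    have h2 := congrArg (rename (R := R) (Equiv.swap i j)) ht
    simp only [map_mul, map_sub, auxSS] at h2
    simp only [map_mul, map_sub, map_add, map_one, rename_X, rename_C,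
      Equiv.swap_apply_left, Equiv.swap_apply_right] at h2 ht
    apply auxCancel i j hne
    linear_combination -h2 - ht
  refine ⟨?_, ?_, ?_⟩
  · obtain ⟨t, ht⟩ := auxDvd i j (X i * (1 + C β * X j) * f)
    exact ⟨t, ht.symm⟩
  · intro t u ht hu
    have hst := key t ht
    simp only [map_mul, map_sub, map_add, map_one, rename_X, rename_C,
      Equiv.swap_apply_left, Equiv.swap_apply_right, hst] at hu
    apply auxCancel i j hne
    linear_combination hu
  · intro t w ht hw
    have hst := key t ht
    simp only [map_mul, map_sub, map_add, map_one, rename_X, rename_C,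
      Equiv.swap_apply_left, Equiv.swap_apply_right, hst] at ht hw
    have hw0 : w = 0 := by
      apply auxCancel i j hne w 0
      linear_combination hw + ht
    rw [hw0]; ring
end
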